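/- In any monoid containing elements s_1, …, s_{n−1} satisfying the braid relations, let {1,…,n} = α ⊔ β ⊔ γ be a partition into three subsets with |α| = r, |β| = s, |γ| = t. Define π ∈ Sh_n^{r+s} by {π(1) < ⋯ < π(r+s)} = α ∪ β; define σ ∈ Sh_{r+s}^r by {σ(1) < ⋯ < σ(r)} = {i : π(i) ∈ α}; define θ ∈ Sh_n^r by {θ(1) < ⋯ < θ(r)} = α; and define δ ∈ Sh_{s+t}^s by {δ(1) < ⋯ < δ(s)} = {j : θ(r+j) ∈ β}. Then [π][σ] = [θ][δ]_{(r)}. -/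

import Mathlib

/-!
Encode a permutation `w` by its one-line notation and attach to it `lehmerWord w`, the product
over positions `i` of `[i; i + c_i]`, where `c` is the Lehmer code of `w`; this is a reduced word
for `w`. The braid relations show that swapping an ascent at positions `i, i + 1` multiplies
`lehmerWord` by `s_i` on the right. Iterating this gives the parabolic factorisation: if `u` is
increasing on a block of consecutive positions and `v` only permutes that block, then
`lehmerWord (u ∘ v) = lehmerWord u * lehmerWord v`. The Lehmer code of an `r`-shuffle `τ` is
`τ(i) - i` at the first `r` positions and `0` afterwards, so `[τ] = lehmerWord τ`. Hence
`[π][σ]` and `[θ][δ]_{(r)}` are both the `lehmerWord` of one permutation, whose one-line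
notation lists `α`, then `β`, then `γ`, each in increasing order.
-/

namespace BraidMonoid

variable {M : Type*} [Monoid M]

/-- `br g a b` is the element `[a;b]` of the paper: for `a ≤ b` it is the descending
product `g (b-1) * g (b-2) * ⋯ * g a`, for `b < a` it is the ascending product
`g b * g (b+1) * ⋯ * g (a-1)`, and `br g a a = 1`. -/
def br (g : ℕ → M) (a b : ℕ) : M :=
  if a ≤ b then (((List.range (b - a)).map (fun j => g (a + j))).reverse).prod
  else ((List.range (a - b)).map (fun j => g (b + j))).prod

/-- `nu g r K N` is `ν_r^{K,N} = [K;r+1][K+1;r+2]⋯[K+N-r-1;N]`. -/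
def nu (g : ℕ → M) (r K N : ℕ) : M :=
  ((List.range (N - r)).map (fun j => br g (K + j) (r + 1 + j))).prod

/-- The braid relations for the elements `g 1, …, g (n-1)`. -/
def BraidRels (g : ℕ → M) (n : ℕ) : Prop :=
  (∀ i, 1 ≤ i → i + 1 ≤ n - 1 → g i * g (i + 1) * g i = g (i + 1) * g i * g (i + 1)) ∧
  (∀ i j, 1 ≤ i → j ≤ n - 1 → i + 1 < j → g i * g j = g j * g i)

/-- `π` is an `r`-shuffle: it is strictly increasing on the first `r` positions and on
the remaining positions (0-indexed). -/
def IsShuffle (n r : ℕ) (π : Equiv.Perm (Fin n)) : Prop :=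
  (∀ i j : Fin n, i < j → (j : ℕ) < r → π i < π j) ∧
  (∀ i j : Fin n, i < j → r ≤ (i : ℕ) → π i < π j)

/-- `[π]_{(t)} = [t+1; t+π(1)] [t+2; t+π(2)] ⋯ [t+r; t+π(r)]` (1-indexed; here `π` is
0-indexed, so position `i` contributes `[t+i+1; t+π(i)+1]`). -/
def brShuffleShift (g : ℕ → M) (t N r : ℕ) (π : Equiv.Perm (Fin N)) : M :=
  (((List.finRange N).take r).map (fun (i : Fin N) => br g (t + (i : ℕ) + 1) (t + (π i : ℕ) + 1))).prod

/-- `[π] = [1;π(1)][2;π(2)]⋯[r;π(r)]`. -/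
def brShuffle (g : ℕ → M) (N r : ℕ) (π : Equiv.Perm (Fin N)) : M :=
  brShuffleShift g 0 N r π

end BraidMonoid

namespace BraidMonoid

variable {M : Type*} [Monoid M] {g : ℕ → M} {n : ℕ}

theorem BraidRels.braid (hg : BraidRels g n) {i : ℕ} (hi : 1 ≤ i) (hin : i + 2 ≤ n) :
    g i * g (i + 1) * g i = g (i + 1) * g i * g (i + 1) :=
  hg.1 i hi (by omega)

theorem BraidRels.commute (hg : BraidRels g n) {i j : ℕ} (hi : 1 ≤ i) (hj : 1 ≤ j)
    (hin : i < n) (hjn : j < n) (hij : i + 1 < j ∨ j + 1 < i) : Commute (g i) (g j) := by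
  rcases hij with hij | hji
  · exact hg.2 i j hi (by omega) hij
  · exact (hg.2 j i hj (by omega) hji).symm

/-- `descWord g t c = g (t + c) * ⋯ * g (t + 1)` is the element `[t + 1; t + 1 + c]`. -/
def descWord (g : ℕ → M) (t : ℕ) : ℕ → M
  | 0 => 1
  | c + 1 => g (t + c + 1) * descWord g t c

@[simp] theorem descWord_zero (g : ℕ → M) (t : ℕ) : descWord g t 0 = 1 := rfl

theorem descWord_succ (g : ℕ → M) (t c : ℕ) :
    descWord g t (c + 1) = g (t + c + 1) * descWord g t c := rfl

theorem descWord_succ' (g : ℕ → M) (t c : ℕ) :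
    descWord g t (c + 1) = descWord g (t + 1) c * g (t + 1) := by
  induction c with
  | zero => simp [descWord]
  | succ c ih =>
    rw [descWord_succ, ih, descWord_succ, ← mul_assoc, Nat.add_right_comm t 1 c,
      ← Nat.add_assoc]

theorem br_eq_descWord (g : ℕ → M) (t c : ℕ) : br g (t + 1) (t + 1 + c) = descWord g t c := by
  rw [br, if_pos (by omega), Nat.add_sub_cancel_left]
  induction c with
  | zero => simp
  | succ c ih =>
    rw [List.range_succ, List.map_append, List.reverse_append, List.map_singleton,
      List.reverse_singleton, List.singleton_append, List.prod_cons, ih, descWord_succ,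
      Nat.add_right_comm t 1 c]

theorem commute_descWord (hg : BraidRels g n) {j t c : ℕ} (hj : 1 ≤ j) (hjn : j < n)
    (htc : t + c < n) (hfar : j < t ∨ t + c + 1 < j) : Commute (g j) (descWord g t c) := by
  induction c with
  | zero => exact Commute.one_right _
  | succ c ih =>
    exact (hg.commute hj (by omega) hjn (by omega) (by omega)).mul_right
      (ih (by omega) (by omega))

theorem descWord_succ_mul_g (hg : BraidRels g n) {t a b : ℕ} (ha : 1 ≤ a) (hab : a ≤ b)
    (hbn : t + b + 2 ≤ n) :
    descWord g t (b + 1) * g (t + a + 1) = g (t + a) * descWord g t (b + 1) := by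
  induction b with
  | zero => omega
  | succ b ih =>
    rcases hab.lt_or_eq with hab | rfl
    · rw [descWord_succ, mul_assoc, ih (by omega) (by omega), ← mul_assoc, ← mul_assoc,
        ((hg.commute (by omega) (by omega) (by omega) (by omega) (by omega)) :
          Commute (g (t + a)) (g (t + (b + 1) + 1))).eq]
    · have hc : Commute (descWord g t b) (g (t + (b + 1) + 1)) :=
        (commute_descWord hg (by omega) (by omega) (by omega) (by omega)).symm
      rw [descWord_succ, descWord_succ, mul_assoc, mul_assoc, hc.eq, ← mul_assoc, ← mul_assoc,
        ← mul_assoc, show t + (b + 1) + 1 = t + b + 1 + 1 by omega,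
        show t + (b + 1) = t + b + 1 by omega, ← hg.braid (by omega) (by omega)]
      simp only [mul_assoc]

theorem descWord_succ_mul_descWord (hg : BraidRels g n) {t a b : ℕ} (hab : a ≤ b)
    (hbn : t + b + 2 ≤ n) :
    descWord g t (b + 1) * descWord g (t + 1) a =
      descWord g t a * descWord g (t + 1) b * g (t + 1) := by
  induction a with
  | zero => simpa using descWord_succ' g t b
  | succ a ih =>
    rw [descWord_succ g (t + 1) a, ← mul_assoc, show t + 1 + a + 1 = t + (a + 1) + 1 by omega,
      descWord_succ_mul_g hg (by omega) hab hbn, mul_assoc, ih (by omega), ← mul_assoc,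
      ← mul_assoc, show t + (a + 1) = t + a + 1 by omega, ← descWord_succ]

variable {ι : Type*} [LinearOrder ι]

/-- The reduced word, shifted by `t`, of the permutation with one-line notation `L`, read off
from its Lehmer code. -/
def lehmerWord (g : ℕ → M) : ℕ → List ι → M
  | _, [] => 1
  | t, a :: L => descWord g t (L.countP (· < a)) * lehmerWord g (t + 1) L

@[simp] theorem lehmerWord_nil (g : ℕ → M) (t : ℕ) : lehmerWord g t ([] : List ι) = 1 := rfl

theorem lehmerWord_cons (g : ℕ → M) (t : ℕ) (a : ι) (L : List ι) :
    lehmerWord g t (a :: L) = descWord g t (L.countP (· < a)) * lehmerWord g (t + 1) L := rfl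

theorem lehmerWord_map {κ : Type*} [LinearOrder κ] (g : ℕ → M) {f : ι → κ}
    (hf : StrictMono f) (t : ℕ) (L : List ι) : lehmerWord g t (L.map f) = lehmerWord g t L := by
  induction L generalizing t with
  | nil => rfl
  | cons a L ih =>
    simp only [List.map_cons, lehmerWord_cons, ih, List.countP_map, Function.comp_def,
      hf.lt_iff_lt]

theorem commute_lehmerWord (hg : BraidRels g n) {j t : ℕ} (hj : 1 ≤ j) (hjt : j < t)
    {L : List ι} (hL : t + L.length ≤ n) : Commute (g j) (lehmerWord g t L) := by
  induction L generalizing t with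
  | nil => exact Commute.one_right _
  | cons a L ih =>
    have hc : L.countP (· < a) ≤ L.length := List.countP_le_length
    simp only [List.length_cons] at hL
    exact (commute_descWord hg hj (by omega) (by omega) (Or.inl hjt)).mul_right
      (ih (by omega) (by omega))

theorem lehmerWord_cons_cons_of_lt (hg : BraidRels g n) {x y : ι} (hxy : x < y) {t : ℕ}
    {L : List ι} (hL : t + L.length + 2 ≤ n) :
    lehmerWord g t (y :: x :: L) = lehmerWord g t (x :: y :: L) * g (t + 1) := by
  have hab : L.countP (· < x) ≤ L.countP (· < y) :=
    List.countP_mono_left fun z _ hz => by simpa using (of_decide_eq_true hz).trans hxy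
  have hb : L.countP (· < y) ≤ L.length := List.countP_le_length
  have hc : Commute (g (t + 1)) (lehmerWord g (t + 1 + 1) L) :=
    commute_lehmerWord hg (by omega) (by omega) (by omega)
  simp only [lehmerWord_cons, List.countP_cons, hxy, not_lt_of_gt hxy, decide_true,
    decide_false, if_true, Bool.false_eq_true, if_false, add_zero, ← mul_assoc]
  rw [descWord_succ_mul_descWord hg hab (by omega), mul_assoc _ (g (t + 1)), hc.eq, ← mul_assoc]

/-- Permuting the entries after a prefix `F` does not change the factors contributed by `F`. -/
theorem lehmerWord_append_eq_mul_of_perm {t : ℕ} (F : List ι) {L L' : List ι}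
    (hLL' : L.Perm L') {x : M}
    (h : lehmerWord g (t + F.length) L = lehmerWord g (t + F.length) L' * x) :
    lehmerWord g t (F ++ L) = lehmerWord g t (F ++ L') * x := by
  induction F generalizing t with
  | nil => simpa using h
  | cons a F ih =>
    rw [List.cons_append, List.cons_append, lehmerWord_cons, lehmerWord_cons,
      ((hLL'.append_left F).countP_eq _), mul_assoc,
      ih (by simpa [Nat.add_assoc, Nat.add_comm 1] using h)]

theorem lehmerWord_cons_append (hg : BraidRels g n) {a : ι} {P : List ι} (hP : ∀ p ∈ P, p < a)
    (Q : List ι) {t : ℕ} (hn : t + P.length + Q.length + 1 ≤ n) :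
    lehmerWord g t (a :: (P ++ Q)) = lehmerWord g t (P ++ a :: Q) * descWord g t P.length := by
  induction P generalizing t with
  | nil => simp
  | cons p P ih =>
    simp only [List.length_cons] at hn
    have hpa : p < a := hP p List.mem_cons_self
    have hmove : lehmerWord g t (p :: a :: (P ++ Q)) =
        lehmerWord g t (p :: (P ++ a :: Q)) * descWord g (t + 1) P.length :=
      lehmerWord_append_eq_mul_of_perm [p] List.perm_middle.symm
        (ih (t := t + 1) (fun q hq => hP q (List.mem_cons_of_mem p hq)) (by omega))
    rw [List.cons_append, lehmerWord_cons_cons_of_lt hg hpa (by simp; omega), hmove,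
      List.length_cons, descWord_succ', mul_assoc, List.cons_append]

theorem lehmerWord_append_eq_mul (hg : BraidRels g n) {L R : List ι}
    (hR : R.Pairwise (· < ·)) (hLR : L.Perm R) (T : List ι) {t : ℕ}
    (hn : t + R.length + T.length ≤ n) :
    lehmerWord g t (L ++ T) = lehmerWord g t (R ++ T) * lehmerWord g t L := by
  induction L generalizing t R with
  | nil =>
    obtain rfl := hLR.nil_eq
    simp
  | cons a L ih =>
    obtain ⟨P, Q, rfl⟩ := List.append_of_mem (hLR.subset List.mem_cons_self)
    obtain ⟨hP, hQ, hPQ⟩ := List.pairwise_append.1 hR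
    have hPa : ∀ p ∈ P, p < a := fun p hp => hPQ p hp a List.mem_cons_self
    have hL : L.Perm (P ++ Q) := (hLR.trans List.perm_middle).cons_inv
    have hcount : L.countP (· < a) = P.length := by
      rw [hL.countP_eq, List.countP_append, List.countP_eq_length.2 (by simpa using hPa),
        List.countP_eq_zero.2 (fun q hq => by simpa using (List.pairwise_cons.1 hQ).1 q hq |>.le),
      Nat.add_zero]
    simp only [List.length_append, List.length_cons] at hn
    rw [List.cons_append, lehmerWord_cons,
      ih (t := t + 1) (List.pairwise_append.2 ⟨hP, (List.pairwise_cons.1 hQ).2,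
        fun p hp q hq => hPQ p hp q (List.mem_cons_of_mem a hq)⟩) hL (by simp; omega),
      ← mul_assoc, ((hL.append_right T).countP_eq _), ← lehmerWord_cons, List.append_assoc,
      lehmerWord_cons_append hg hPa _ (by simp; omega), lehmerWord_cons, hcount, mul_assoc,
      List.append_assoc, List.cons_append]

open Finset

theorem lehmerWord_append_ofFn_comp (hg : BraidRels g n) (F : List ι) {N : ℕ} {f : Fin N → ι}
    (hf : StrictMono f) (τ : Equiv.Perm (Fin N)) (T : List ι) {t : ℕ}
    (hn : t + F.length + N + T.length ≤ n) :
    lehmerWord g t (F ++ (List.ofFn (f ∘ τ) ++ T)) =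
      lehmerWord g t (F ++ (List.ofFn f ++ T)) * lehmerWord g (t + F.length) (List.ofFn τ) := by
  refine lehmerWord_append_eq_mul_of_perm F ((τ.ofFn_comp_perm f).append_right T) ?_
  rw [lehmerWord_append_eq_mul hg (List.pairwise_ofFn.2 fun _ _ hij => hf hij)
    (τ.ofFn_comp_perm f) T (by simpa [Nat.add_assoc] using hn), ← List.map_ofFn,
    lehmerWord_map g hf]

theorem countP_ofFn {α : Type*} {m : ℕ} (w : Fin m → α) (p : α → Prop) [DecidablePred p] :
    (List.ofFn w).countP (fun x => decide (p x)) = #{j | p (w j)} := by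
  induction m with
  | zero => simp
  | succ m ih =>
    rw [List.ofFn_succ, List.countP_cons, ih, Fin.card_filter_univ_succ']
    simp [add_comm]

theorem lehmerWord_ofFn (g : ℕ → M) {m : ℕ} (v : Fin m → ι) (t : ℕ) :
    lehmerWord g t (List.ofFn v) =
      (List.ofFn fun i => descWord g (t + i) #{j | i < j ∧ v j < v i}).prod := by
  induction m generalizing t with
  | zero => simp
  | succ m ih =>
    rw [List.ofFn_succ, List.ofFn_succ, List.prod_cons, lehmerWord_cons, ih, countP_ofFn,
      Fin.card_filter_univ_succ]
    simp only [lt_self_iff_false, false_and, if_false, Fin.succ_pos, true_and, Fin.val_zero,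
      add_zero, Fin.val_succ]
    congr 2
    refine congrArg List.ofFn (funext fun i => ?_)
    rw [Fin.card_filter_univ_succ]
    simp only [Fin.not_lt_zero, false_and, if_false, Fin.succ_lt_succ_iff, Nat.add_right_comm,
      Nat.add_assoc]

section Shuffle

variable {N k : ℕ} {τ : Equiv.Perm (Fin N)}

theorem IsShuffle.card_inversions_of_lt (hτ : IsShuffle N k τ) {i : Fin N}
    (hi : (i : ℕ) < k) :
    (i : ℕ) + #{j | i < j ∧ τ j < τ i} = τ i := by
  have hsplit : ({j | τ j < τ i} : Finset (Fin N)) =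
      Iio i ∪ ({j | i < j ∧ τ j < τ i} : Finset (Fin N)) := by
    ext j
    simp only [mem_filter, mem_univ, true_and, mem_union, mem_Iio]
    refine ⟨fun hj => ?_, ?_⟩
    · rcases lt_trichotomy j i with hji | rfl | hij
      · exact Or.inl hji
      · exact absurd hj (lt_irrefl _)
      · exact Or.inr ⟨hij, hj⟩
    · rintro (hji | ⟨_, hj⟩)
      · exact hτ.1 j i hji hi
      · exact hj
  have hdisj : Disjoint (Iio i) ({j | i < j ∧ τ j < τ i} : Finset (Fin N)) :=
    disjoint_left.2 fun j hji hij => lt_asymm (mem_Iio.1 hji) (mem_filter.1 hij).2.1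
  rw [← Fin.card_Iio, ← card_union_of_disjoint hdisj, ← hsplit,
    card_equiv τ (t := Iio (τ i)) (by simp), Fin.card_Iio]

theorem IsShuffle.card_inversions_of_le (hτ : IsShuffle N k τ) {i : Fin N}
    (hi : k ≤ (i : ℕ)) :
    #{j | i < j ∧ τ j < τ i} = 0 := by
  rw [card_eq_zero, filter_eq_empty_iff]
  rintro j - ⟨hij, hji⟩
  exact lt_asymm hji (hτ.2 i j hij hi)

theorem brShuffleShift_eq_lehmerWord (hτ : IsShuffle N k τ) (g : ℕ → M) (t : ℕ) :
    brShuffleShift g t N k τ = lehmerWord g t (List.ofFn τ) := by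
  rw [lehmerWord_ofFn, List.ofFn_eq_map, ← List.take_append_drop k (List.finRange N),
    List.map_append, List.prod_append, brShuffleShift,
    List.prod_eq_one (l := ((List.finRange N).drop k).map _), mul_one]
  · refine congrArg List.prod (List.map_congr_left fun i hi => ?_)
    have hik : (i : ℕ) < k := by
      obtain ⟨j, hj, rfl⟩ := List.mem_take_iff_getElem.1 hi
      simp only [List.length_finRange, lt_min_iff] at hj
      simpa using hj.1
    rw [← hτ.card_inversions_of_lt hik, ← br_eq_descWord]
    congr 1
    omega
  · simp only [List.mem_map]
    rintro _ ⟨i, hi, rfl⟩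
    obtain ⟨j, hj, rfl⟩ := List.mem_drop_iff_getElem.1 hi
    rw [hτ.card_inversions_of_le (by simp), descWord_zero]

theorem IsShuffle.strictMono_castLE (hτ : IsShuffle N k τ) (hk : k ≤ N) :
    StrictMono fun i : Fin k => τ (Fin.castLE hk i) :=
  fun _ j hij => hτ.1 _ _ hij j.isLt

theorem IsShuffle.strictMono_natAdd {m : ℕ} (hτ : IsShuffle N k τ) (h : k + m = N) :
    StrictMono fun j : Fin m => τ (Fin.cast h (Fin.natAdd k j)) :=
  fun _ _ hij => hτ.2 _ _ (by simpa using hij) (by simp)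

end Shuffle

theorem ofFn_eq_append_ofFn {α : Type*} {k m N : ℕ} (h : k + m = N) (v : Fin N → α) :
    List.ofFn v = List.ofFn (fun i : Fin k => v (Fin.castLE (Nat.le.intro h) i)) ++
      List.ofFn (fun j : Fin m => v (Fin.cast h (Fin.natAdd k j))) := by
  subst h
  exact List.ofFn_add

theorem eq_of_strictMono_of_forall_mem {S : Finset ι} {k : ℕ} (hS : S.card = k)
    {u v : Fin k → ι} (hu : StrictMono u) (hv : StrictMono v) (huS : ∀ i, u i ∈ S)
    (hvS : ∀ i, v i ∈ S) : u = v :=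
  (orderEmbOfFin_unique hS huS hu).trans (orderEmbOfFin_unique hS hvS hv).symm

theorem ofFn_shuffle_comp_eq {r s t : ℕ} {α β γ : Finset (Fin (r + s + t))}
    (hcover : α ∪ β ∪ γ = univ) (hα : #α = r) (hβ : #β = s) (hγ : #γ = t)
    {π : Equiv.Perm (Fin (r + s + t))} (hπsh : IsShuffle (r + s + t) (r + s) π)
    (hπ : ∀ i : Fin (r + s + t), (i : ℕ) < r + s ↔ π i ∈ α ∪ β)
    {σ : Equiv.Perm (Fin (r + s))} (hσsh : IsShuffle (r + s) r σ)
    (hσ : ∀ i : Fin (r + s), (i : ℕ) < r ↔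
      π (Fin.castLE (Nat.le_add_right (r + s) t) (σ i)) ∈ α)
    {θ : Equiv.Perm (Fin (r + s + t))} (hθsh : IsShuffle (r + s + t) r θ)
    (hθ : ∀ i : Fin (r + s + t), (i : ℕ) < r ↔ θ i ∈ α)
    {δ : Equiv.Perm (Fin (s + t))} (hδsh : IsShuffle (s + t) s δ)
    (hδ : ∀ j : Fin (s + t), (j : ℕ) < s ↔
      θ (Fin.cast (Nat.add_assoc r s t).symm (Fin.natAdd r (δ j))) ∈ β) :
    List.ofFn (fun i => π (Fin.castLE (Nat.le_add_right (r + s) t) (σ i))) ++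
        List.ofFn (fun j => π (Fin.natAdd (r + s) j)) =
      List.ofFn (fun i => θ (Fin.castLE (Nat.le.intro (Nat.add_assoc r s t).symm) i)) ++
        List.ofFn (fun j => θ (Fin.cast (Nat.add_assoc r s t).symm (Fin.natAdd r (δ j)))) := by
  have hmemγ : ∀ x, x ∉ α → x ∉ β → x ∈ γ := fun x hxα hxβ => by
    have hx : x ∈ α ∪ β ∪ γ := hcover ▸ mem_univ x
    simpa [hxα, hxβ] using hx
  have hπL := hπsh.strictMono_castLE (Nat.le_add_right (r + s) t)
  have hθR := hθsh.strictMono_natAdd (Nat.add_assoc r s t).symm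
  rw [List.ofFn_add (n := r) (m := s), List.ofFn_add (n := s) (m := t), List.append_assoc]
  refine congrArg₂ (· ++ ·) ?_ (congrArg₂ (· ++ ·) ?_ ?_) <;> refine congrArg List.ofFn
    (eq_of_strictMono_of_forall_mem ‹_› ?_ ?_ (fun i => ?_) (fun i => ?_))
  · exact hπL.comp (hσsh.strictMono_castLE _)
  · exact hθsh.strictMono_castLE _
  · exact (hσ _).1 i.isLt
  · exact (hθ _).1 i.isLt
  · exact hπL.comp (hσsh.strictMono_natAdd rfl)
  · exact hθR.comp (hδsh.strictMono_castLE _)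
  · exact (mem_union.1 ((hπ _).1 (σ _).isLt)).resolve_left (mt (hσ _).2 (by simp))
  · exact (hδ _).1 (by simp)
  · exact hπsh.strictMono_natAdd rfl
  · exact hθR.comp (hδsh.strictMono_natAdd rfl)
  · exact hmemγ _ (fun h => by simpa using (hπ _).2 (mem_union_left β h))
      (fun h => by simpa using (hπ _).2 (mem_union_right α h))
  · exact hmemγ _ (fun h => by simpa using (hθ _).2 h) (fun h => by simpa using (hδ _).2 h)

end BraidMonoid

open BraidMonoid in
theorem stmt7_general {M : Type*} [Monoid M] (n : ℕ) (g : ℕ → M) (hg : BraidRels g n)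
    (r s t : ℕ) (hn : r + s + t = n)
    (α β γ : Finset (Fin n))
    (hcover : α ∪ β ∪ γ = Finset.univ)
    (hα : α.card = r) (hβ : β.card = s) (hγ : γ.card = t)
    (π : Equiv.Perm (Fin n)) (hπsh : IsShuffle n (r + s) π)
    (hπ : ∀ i : Fin n, (i : ℕ) < r + s ↔ π i ∈ α ∪ β)
    (σ : Equiv.Perm (Fin (r + s))) (hσsh : IsShuffle (r + s) r σ)
    (hσ : ∀ i : Fin (r + s), (i : ℕ) < r ↔
      π (Fin.castLE (le_of_le_of_eq (Nat.le_add_right (r + s) t) hn) (σ i)) ∈ α)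
    (θ : Equiv.Perm (Fin n)) (hθsh : IsShuffle n r θ)
    (hθ : ∀ i : Fin n, (i : ℕ) < r ↔ θ i ∈ α)
    (δ : Equiv.Perm (Fin (s + t))) (hδsh : IsShuffle (s + t) s δ)
    (hδ : ∀ j : Fin (s + t), (j : ℕ) < s ↔
      θ ⟨r + (δ j : ℕ), lt_of_lt_of_le (Nat.add_lt_add_left (δ j).isLt r)
        (le_of_eq ((Nat.add_assoc r s t).symm.trans hn))⟩ ∈ β) :
    brShuffle g n (r + s) π * brShuffle g (r + s) r σ
      = brShuffle g n r θ * brShuffleShift g r (s + t) s δ := by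
  subst hn
  have hπL := hπsh.strictMono_castLE (Nat.le_add_right (r + s) t)
  have hθR := hθsh.strictMono_natAdd (Nat.add_assoc r s t).symm
  have hπσ := lehmerWord_append_ofFn_comp hg [] hπL σ
    (List.ofFn fun j => π (Fin.natAdd (r + s) j)) (t := 0) (by simp)
  have hθδ := lehmerWord_append_ofFn_comp hg
    (List.ofFn fun i => θ (Fin.castLE (Nat.le.intro (Nat.add_assoc r s t).symm) i)) hθR δ []
    (t := 0) (by simp [Nat.add_assoc])
  simp only [List.nil_append, List.append_nil, List.length_nil, List.length_ofFn, add_zero,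
    zero_add] at hπσ hθδ
  rw [brShuffle, brShuffle, brShuffle, brShuffleShift_eq_lehmerWord hπsh,
    brShuffleShift_eq_lehmerWord hσsh, brShuffleShift_eq_lehmerWord hθsh,
    brShuffleShift_eq_lehmerWord hδsh, List.ofFn_add (f := ⇑π),
    ofFn_eq_append_ofFn (Nat.add_assoc r s t).symm θ, ← hπσ, ← hθδ]
  exact congrArg (lehmerWord g 0)
    (ofFn_shuffle_comp_eq hcover hα hβ hγ hπsh hπ hσsh hσ hθsh hθ hδsh hδ)

open BraidMonoid in
/-- the key combinatorial identity in the proof of Lemma 5.2: let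
`{1,…,n} = α ⊔ β ⊔ γ` with `|α| = r`, `|β| = s`, `|γ| = t`.  Let `π ∈ Sh_n^{r+s}` pick out
`α ∪ β`, let `σ ∈ Sh_{r+s}^r` pick out the positions of `α` inside the listing of `α ∪ β`,
let `θ ∈ Sh_n^r` pick out `α`, and let `δ ∈ Sh_{s+t}^s` pick out the positions `j` with
`θ(r+j) ∈ β`.  Then `[π][σ] = [θ][δ]_{(r)}`. -/
theorem stmt7 {M : Type*} [Monoid M] (n : ℕ) (g : ℕ → M) (hg : BraidRels g n)
    (r s t : ℕ) (hn : r + s + t = n)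
    (α β γ : Finset (Fin n))
    (hab : Disjoint α β) (hag : Disjoint α γ) (hbg : Disjoint β γ)
    (hcover : α ∪ β ∪ γ = Finset.univ)
    (hα : α.card = r) (hβ : β.card = s) (hγ : γ.card = t)
    (π : Equiv.Perm (Fin n)) (hπsh : IsShuffle n (r + s) π)
    (hπ : ∀ i : Fin n, (i : ℕ) < r + s ↔ π i ∈ α ∪ β)
    (σ : Equiv.Perm (Fin (r + s))) (hσsh : IsShuffle (r + s) r σ)
    (hσ : ∀ i : Fin (r + s), (i : ℕ) < r ↔
      π (Fin.castLE (le_of_le_of_eq (Nat.le_add_right (r + s) t) hn) (σ i)) ∈ α)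
    (θ : Equiv.Perm (Fin n)) (hθsh : IsShuffle n r θ)
    (hθ : ∀ i : Fin n, (i : ℕ) < r ↔ θ i ∈ α)
    (δ : Equiv.Perm (Fin (s + t))) (hδsh : IsShuffle (s + t) s δ)
    (hδ : ∀ j : Fin (s + t), (j : ℕ) < s ↔
      θ ⟨r + (δ j : ℕ), lt_of_lt_of_le (Nat.add_lt_add_left (δ j).isLt r)
        (le_of_eq ((Nat.add_assoc r s t).symm.trans hn))⟩ ∈ β) :
    brShuffle g n (r + s) π * brShuffle g (r + s) r σ
      = brShuffle g n r θ * brShuffleShift g r (s + t) s δ :=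
  stmt7_general n g hg r s t hn α β γ hcover hα hβ hγ π hπsh hπ σ hσsh hσ θ hθsh hθ δ hδsh hδ
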